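/- arXiv:2009.04542 — 2 statements merged into one kernel-verified Lean document; each statement's English description precedes it below -/
import Mathlib

section
/- Under the stated hypotheses, for all m ≥ 1 and all k, l ∈ ℤ: [H_m, [B_k, B_{l+1}]_{v^{−2}} + [B_l, B_{k+1}]_{v^{−2}}] = 0. -/
/-!
Commutation with `H_m` is a derivation sending `B_a` to `r (B_{a+m} - B_{a-m} C^m)`, where
`r = [mc]/m`. Applied to `S(k, l) = [B_k, B_{l+1}]_{v⁻²} + [B_l, B_{k+1}]_{v⁻²}` it gives
`r (S(k+m, l) + S(k, l+m)) - r (S(k-m, l) + S(k, l-m)) C^m`. The defining relation writes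
`S(a, b)` as `g(b - a) C^a + g(a - b) C^b`, so `S(a+m, b) = S(a, b-m) C^m`, and by the symmetry
of `S` also `S(a, b+m) = S(a-m, b) C^m`; hence the two halves cancel.
-/

noncomputable section

abbrev F : Type := RatFunc ℚ

def v : F := RatFunc.X

def qnum (n : ℤ) : F := (v ^ n - v ^ (-n)) / (v - v⁻¹)

/-- The `v`-commutator `[x,y]_{v^a} = xy − v^a yx` in an `F`-algebra. -/
def qc {A : Type} [Ring A] [Algebra F A] (x y : A) (a : ℤ) : A := x * y - (v ^ a) • (y * x)

def twistedSum {A : Type} [Semiring A] (g : ℤ → A) (C : Aˣ) (a b : ℤ) : A :=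
  g (b - a) * ↑(C ^ a) + g (a - b) * ↑(C ^ b)

theorem twistedSum_add_left {A : Type} [Semiring A] (g : ℤ → A) (C : Aˣ) (a b m : ℤ) :
    twistedSum g C (a + m) b = twistedSum g C a (b - m) * ↑(C ^ m) := by
  simp only [twistedSum, add_mul, mul_assoc, ← Units.val_mul, ← zpow_add, sub_add_cancel]
  congr 3 <;> ring

section

attribute [local instance] LieRing.ofAssociativeRing

variable {A : Type} [Ring A] [Algebra F A]

theorem zpow_neg_smul_qc (x y : A) (a : ℤ) : v ^ (-a) • qc x y a = -qc y x (-a) := by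
  have hv : (v : F) ≠ 0 := RatFunc.X_ne_zero
  simp only [qc, smul_sub, smul_smul, ← zpow_add₀ hv, neg_add_cancel, zpow_zero, one_smul, neg_sub]

theorem lie_qc (h x y : A) (a : ℤ) : ⁅h, qc x y a⁆ = qc ⁅h, x⁆ y a + qc x ⁅h, y⁆ a := by
  simp only [Ring.lie_def, qc, mul_sub, sub_mul, mul_smul_comm, smul_mul_assoc, smul_sub, mul_assoc]
  abel

def qcSym (B : ℤ → A) (a b : ℤ) : A := qc (B a) (B (b + 1)) (-2) + qc (B b) (B (a + 1)) (-2)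

theorem qcSym_comm (B : ℤ → A) (a b : ℤ) : qcSym B a b = qcSym B b a := add_comm _ _

theorem qcSym_eq_qc_sub_smul_qc (B : ℤ → A) (a b : ℤ) :
    qcSym B a b = qc (B a) (B (b + 1)) (-2) - v ^ (-2 : ℤ) • qc (B (a + 1)) (B b) 2 := by
  rw [zpow_neg_smul_qc, sub_neg_eq_add, qcSym]

variable {h c : A} {B : ℤ → A} {r : F} {m : ℤ}

theorem lie_qc_of_lie_eq (hc : ∀ z, c * z = z * c)
    (hB : ∀ a, ⁅h, B a⁆ = r • B (a + m) - r • (B (a - m) * c)) (a b e : ℤ) :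
    ⁅h, qc (B a) (B b) e⁆ = r • (qc (B (a + m)) (B b) e + qc (B a) (B (b + m)) e)
      - r • ((qc (B (a - m)) (B b) e + qc (B a) (B (b - m)) e) * c) := by
  rw [lie_qc, hB, hB]
  simp only [qc, sub_mul, mul_sub, add_mul, smul_mul_assoc, mul_smul_comm, smul_sub, smul_add,
    smul_smul, ← mul_assoc]
  simp only [mul_assoc _ c, hc]
  simp only [← mul_assoc]
  rw [mul_comm r]
  abel

theorem lie_qcSym_eq_zero (hc : ∀ z, c * z = z * c)
    (hB : ∀ a, ⁅h, B a⁆ = r • B (a + m) - r • (B (a - m) * c))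
    (hshift : ∀ a b, qcSym B (a + m) b = qcSym B a (b - m) * c) (k l : ℤ) :
    ⁅h, qcSym B k l⁆ = 0 := by
  have hshift' : qcSym B k (l + m) = qcSym B (k - m) l * c := by
    rw [qcSym_comm, hshift, qcSym_comm]
  have hlie : ⁅h, qcSym B k l⁆ = r • (qcSym B (k + m) l + qcSym B k (l + m))
      - r • ((qcSym B (k - m) l + qcSym B k (l - m)) * c) := by
    rw [qcSym, lie_add, lie_qc_of_lie_eq hc hB, lie_qc_of_lie_eq hc hB]
    simp only [qcSym, add_mul, smul_add, add_right_comm _ (1 : ℤ) m, sub_add_eq_add_sub _ m (1 : ℤ)]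
    abel
  rw [hlie, hshift, hshift', add_mul, add_comm (qcSym B k (l - m) * c), sub_self]

end

theorem relation_rhs_eq_twistedSum {A : Type} [Ring A] [Algebra F A] (Θ : ℤ → A) (C K : Aˣ)
    (hK : ∀ x : A, (K : A) * x = x * K) (a b : ℤ) :
    (v ^ (-2 : ℤ)) • (Θ (b - a + 1) * ((C ^ a * K : Aˣ) : A))
        - (v ^ (-4 : ℤ)) • (Θ (b - a - 1) * ((C ^ (a + 1) * K : Aˣ) : A))
        + (v ^ (-2 : ℤ)) • (Θ (a - b + 1) * ((C ^ b * K : Aˣ) : A))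
        - (v ^ (-4 : ℤ)) • (Θ (a - b - 1) * ((C ^ (b + 1) * K : Aˣ) : A))
      = twistedSum (fun n ↦ v ^ (-2 : ℤ) • (Θ (n + 1) * K) - v ^ (-4 : ℤ) • (Θ (n - 1) * ↑(C * K)))
          C a b := by
  have hKcomm (u : Aˣ) : Commute K u := Units.ext (hK u)
  have hsucc (e : ℤ) : C ^ (e + 1) * K = C * K * C ^ e := by
    rw [zpow_add_one, mul_assoc]
    exact ((Commute.self_zpow C e).symm.mul_right (hKcomm _).symm).eq
  simp only [twistedSum, hsucc, (hKcomm _).symm.eq, sub_mul, smul_mul_assoc, mul_assoc,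
    Units.val_mul]
  abel

theorem stmt17_general (A : Type) [Ring A] [Algebra F A] (C K : Aˣ)
    (hC : ∀ x : A, (C : A) * x = x * C) (hK : ∀ x : A, (K : A) * x = x * K)
    (B : ℤ → A) (Θ : ℤ → A)
    (hrel : ∀ k l : ℤ,
      qc (B k) (B (l + 1)) (-2) - (v ^ (-2 : ℤ)) • qc (B (k + 1)) (B l) 2
      = (v ^ (-2 : ℤ)) • (Θ (l - k + 1) * ((C ^ k * K : Aˣ) : A))
        - (v ^ (-4 : ℤ)) • (Θ (l - k - 1) * ((C ^ (k + 1) * K : Aˣ) : A))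
        + (v ^ (-2 : ℤ)) • (Θ (k - l + 1) * ((C ^ l * K : Aˣ) : A))
        - (v ^ (-4 : ℤ)) • (Θ (k - l - 1) * ((C ^ (l + 1) * K : Aˣ) : A)))
    (H : ℕ → A) (c : ℤ)
    (hH : ∀ m : ℕ, 1 ≤ m → ∀ l : ℤ,
      H m * B l - B l * H m
      = (qnum (m * c) / (m : F)) • B (l + m)
        - (qnum (m * c) / (m : F)) • (B (l - m) * ((C ^ m : Aˣ) : A)))
    (m : ℕ) (hm : 1 ≤ m) (k l : ℤ) :
    H m * (qc (B k) (B (l + 1)) (-2) + qc (B l) (B (k + 1)) (-2))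
      - (qc (B k) (B (l + 1)) (-2) + qc (B l) (B (k + 1)) (-2)) * H m = 0 := by
  have hcentral (x : A) : ((C ^ m : Aˣ) : A) * x = x * ((C ^ m : Aˣ) : A) := by
    rw [Units.val_pow_eq_pow_val]
    exact (Commute.pow_left (hC x) m).eq
  have hshift (a b : ℤ) : qcSym B (a + m) b = qcSym B a (b - m) * ((C ^ m : Aˣ) : A) := by
    simp only [qcSym_eq_qc_sub_smul_qc, hrel, relation_rhs_eq_twistedSum Θ C K hK,
      twistedSum_add_left, zpow_natCast]
  exact lie_qcSym_eq_zero hcentral (hH m hm) hshift k l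

/-- `[H_m, [B_k, B_{l+1}]_{v⁻²} + [B_l, B_{k+1}]_{v⁻²}] = 0`. -/
theorem stmt17 (A : Type) [Ring A] [Algebra F A] (C K : Aˣ)
    (hC : ∀ x : A, (C : A) * x = x * C) (hK : ∀ x : A, (K : A) * x = x * K)
    (B : ℤ → A) (Θ : ℤ → A)
    (h0 : Θ 0 = ((v - v⁻¹)⁻¹ : F) • (1 : A)) (hneg : ∀ n : ℤ, n < 0 → Θ n = 0)
    (hrel : ∀ k l : ℤ,
      qc (B k) (B (l + 1)) (-2) - (v ^ (-2 : ℤ)) • qc (B (k + 1)) (B l) 2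
      = (v ^ (-2 : ℤ)) • (Θ (l - k + 1) * ((C ^ k * K : Aˣ) : A))
        - (v ^ (-4 : ℤ)) • (Θ (l - k - 1) * ((C ^ (k + 1) * K : Aˣ) : A))
        + (v ^ (-2 : ℤ)) • (Θ (k - l + 1) * ((C ^ l * K : Aˣ) : A))
        - (v ^ (-4 : ℤ)) • (Θ (k - l - 1) * ((C ^ (l + 1) * K : Aˣ) : A)))
    (H : ℕ → A) (c : ℤ)
    (hH : ∀ m : ℕ, 1 ≤ m → ∀ l : ℤ,
      H m * B l - B l * H m
      = (qnum (m * c) / (m : F)) • B (l + m)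
        - (qnum (m * c) / (m : F)) • (B (l - m) * ((C ^ m : Aˣ) : A)))
    (m : ℕ) (hm : 1 ≤ m) (k l : ℤ) :
    H m * (qc (B k) (B (l + 1)) (-2) + qc (B l) (B (k + 1)) (-2))
      - (qc (B k) (B (l + 1)) (-2) + qc (B l) (B (k + 1)) (-2)) * H m = 0 :=
  stmt17_general A C K hC hK B Θ hrel H c hH m hm k l
end
end

section
/- Under the stated hypotheses, [H_m, Θ_n] = 0 and [H_m, H'_n] = 0 for all m, n ≥ 1. -/
/-!
`ad h = [h, -]` is a derivation, and by hypothesis `ad (H m)` acts on the `B l` as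
`a • (B (l + m) - B (l - m) * C ^ m)`. Applied to the defining relation, the `B` side becomes a
combination of the relation shifted by `±m` in `k` and in `l`. On the `Θ` side, shifting `k` by `m`
is the same as shifting `l` by `-m` and multiplying by `C ^ m`, so these shifted right-hand sides
cancel: `ad (H m)` kills every right-hand side. As `C` and `K` are central, this says that the
sequence `ad (H m) (Θ n)`, which vanishes for `n ≤ 0`, satisfies the relation with zero left side;
at `(k, l) = (0, n + 1)` this forces `ad (H m) (Θ (n + 2))` to be a multiple of `ad (H m) (Θ n)`,
so it vanishes identically. Finally `(v - v⁻¹) • Θ n` is `(v - v⁻¹) • H' n` plus polynomials in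
the `H' i` with `i < n`, so by strong induction every `H' n` lies in the centralizer of `H m`.
-/

noncomputable section

open Finset

theorem v_ne_zero : v ≠ 0 := RatFunc.X_ne_zero

theorem v_sub_inv_ne_zero : v - v⁻¹ ≠ 0 := by
  intro h
  have hsq : v * v = 1 := by
    nth_rewrite 2 [sub_eq_zero.mp h]
    exact mul_inv_cancel₀ v_ne_zero
  have := congrArg RatFunc.intDegree hsq
  rw [RatFunc.intDegree_mul v_ne_zero v_ne_zero, v, RatFunc.intDegree_X,
    RatFunc.intDegree_one] at this
  norm_num at this

theorem lt_of_mem_antidiagonalTuple {k n : ℕ} (hk : 2 ≤ k) {f : Fin k → ℕ}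
    (hf : f ∈ Nat.antidiagonalTuple k n) (hpos : ∀ t, 1 ≤ f t) (i : Fin k) : f i < n := by
  have : Nontrivial (Fin k) := Fin.nontrivial_iff_two_le.mpr hk
  obtain ⟨j, hji⟩ := exists_ne i
  rw [← Nat.mem_antidiagonalTuple.mp hf]
  exact single_lt_sum hji (mem_univ i) (mem_univ j) (hpos j) fun _ _ _ => Nat.zero_le _

section Commutator

variable {A : Type} [Ring A] [Algebra F A]

def ad (h : A) : A →ₗ[F] A := LinearMap.mulLeft F h - LinearMap.mulRight F h

theorem ad_apply (h x : A) : ad h x = h * x - x * h := rfl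

theorem ad_mul (h x y : A) : ad h (x * y) = ad h x * y + x * ad h y := by
  simp only [ad_apply]; noncomm_ring

theorem ad_mul_of_commute (h x : A) {u : A} (hu : ∀ z, u * z = z * u) :
    ad h (x * u) = ad h x * u := by
  rw [ad_mul, ad_apply h u, hu h, sub_self, mul_zero, add_zero]

theorem ad_eq_zero_iff {h x : A} : ad h x = 0 ↔ x ∈ Subalgebra.centralizer F {h} := by
  simp only [ad_apply, sub_eq_zero, Subalgebra.mem_centralizer_iff, Set.mem_singleton_iff,
    forall_eq]

theorem qc_sub_left (x x' y : A) (t : ℤ) : qc (x - x') y t = qc x y t - qc x' y t := by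
  simp only [qc, sub_mul, mul_sub, smul_sub]; abel

theorem qc_sub_right (x y y' : A) (t : ℤ) : qc x (y - y') t = qc x y t - qc x y' t := by
  simp only [qc, sub_mul, mul_sub, smul_sub]; abel

theorem qc_smul_left (s : F) (x y : A) (t : ℤ) : qc (s • x) y t = s • qc x y t := by
  simp only [qc, smul_mul_assoc, mul_smul_comm, smul_sub, smul_comm s]

theorem qc_smul_right (s : F) (x y : A) (t : ℤ) : qc x (s • y) t = s • qc x y t := by
  simp only [qc, smul_mul_assoc, mul_smul_comm, smul_sub, smul_comm s]

theorem qc_mul_of_commute_left {u : A} (hu : ∀ z, u * z = z * u) (x y : A) (t : ℤ) :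
    qc (x * u) y t = qc x y t * u := by
  simp only [qc, sub_mul, smul_mul_assoc, mul_assoc, hu y]

theorem qc_mul_of_commute_right {u : A} (hu : ∀ z, u * z = z * u) (x y : A) (t : ℤ) :
    qc x (y * u) t = qc x y t * u := by
  simp only [qc, sub_mul, smul_mul_assoc, mul_assoc, hu x]

theorem ad_qc (h x y : A) (t : ℤ) :
    ad h (qc x y t) = qc (ad h x) y t + qc x (ad h y) t := by
  simp only [qc, map_sub, map_smul, ad_mul, smul_add]
  abel

def relLHS (B : ℤ → A) (k l : ℤ) : A :=
  qc (B k) (B (l + 1)) (-2) - (v ^ (-2 : ℤ)) • qc (B (k + 1)) (B l) 2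

def relRHS (C K : Aˣ) (Θ : ℤ → A) (k l : ℤ) : A :=
  (v ^ (-2 : ℤ)) • (Θ (l - k + 1) * ((C ^ k * K : Aˣ) : A))
    - (v ^ (-4 : ℤ)) • (Θ (l - k - 1) * ((C ^ (k + 1) * K : Aˣ) : A))
    + (v ^ (-2 : ℤ)) • (Θ (k - l + 1) * ((C ^ l * K : Aˣ) : A))
    - (v ^ (-4 : ℤ)) • (Θ (k - l - 1) * ((C ^ (l + 1) * K : Aˣ) : A))

theorem ad_relLHS {h u : A} (hu : ∀ z, u * z = z * u) {a : F} {j : ℤ} {B : ℤ → A}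
    (hB : ∀ l, ad h (B l) = a • (B (l + j) - B (l - j) * u)) (k l : ℤ) :
    ad h (relLHS B k l) = a • (relLHS B (k + j) l + relLHS B k (l + j)
      - (relLHS B (k - j) l + relLHS B k (l - j)) * u) := by
  have e1 : ∀ x : ℤ, x + 1 + j = x + j + 1 := fun x => by ring
  have e2 : ∀ x : ℤ, x + 1 - j = x - j + 1 := fun x => by ring
  simp only [relLHS, map_sub, map_smul, ad_qc, hB, qc_sub_left, qc_smul_left,
    qc_mul_of_commute_left hu, qc_sub_right, qc_smul_right, qc_mul_of_commute_right hu,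
    sub_mul, add_mul, smul_mul_assoc, smul_sub, smul_add, smul_smul, e1, e2]
  ring_nf
  abel

theorem relRHS_add_left {C K : Aˣ} (hKC : Commute K C) (Θ : ℤ → A) (j k l : ℤ) :
    relRHS C K Θ (k + j) l = relRHS C K Θ k (l - j) * ((C ^ j : Aˣ) : A) := by
  have hshift : ∀ i : ℤ, C ^ i * K * C ^ j = C ^ (i + j) * K := fun i => by
    rw [mul_assoc, (hKC.zpow_right j).eq, ← mul_assoc, ← zpow_add]
  simp only [relRHS, sub_mul, add_mul, smul_mul_assoc, mul_assoc, ← Units.val_mul, hshift]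
  ring_nf

theorem ad_relRHS {C K : Aˣ} (hC : ∀ x : A, (C : A) * x = x * C)
    (hK : ∀ x : A, (K : A) * x = x * K) (h : A) (Θ : ℤ → A) (k l : ℤ) :
    ad h (relRHS C K Θ k l) = relRHS C K (fun n => ad h (Θ n)) k l := by
  have hcentral : ∀ i : ℤ, ∀ x : A, ((C ^ i * K : Aˣ) : A) * x = x * ((C ^ i * K : Aˣ) : A) :=
    fun i x => by
      rw [Units.val_mul]
      exact ((Commute.units_zpow_right (hC x).symm i).mul_right (hK x).symm).symm
  simp only [relRHS, map_sub, map_add, map_smul, ad_mul_of_commute _ _ (hcentral _)]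

theorem ad_relRHS_eq_zero {C K : Aˣ} (hC : ∀ x : A, (C : A) * x = x * C) (hKC : Commute K C)
    {B Θ : ℤ → A} (hrel : ∀ k l, relLHS B k l = relRHS C K Θ k l) {h : A} {a : F} {j : ℤ}
    (hB : ∀ l, ad h (B l) = a • (B (l + j) - B (l - j) * ((C ^ j : Aˣ) : A))) (k l : ℤ) :
    ad h (relRHS C K Θ k l) = 0 := by
  have hCj : ∀ x : A, ((C ^ j : Aˣ) : A) * x = x * ((C ^ j : Aˣ) : A) :=
    fun x => (Commute.units_zpow_right (hC x).symm j).symm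
  have hshift := relRHS_add_left hKC Θ j (k - j) (l + j)
  rw [sub_add_cancel, add_sub_cancel_right] at hshift
  rw [← hrel, ad_relLHS hCj hB, hrel, hrel, hrel, hrel, relRHS_add_left hKC, add_mul, ← hshift]
  abel_nf
  exact smul_zero a

theorem eq_zero_of_relRHS_eq_zero {C K : Aˣ} {Ψ : ℤ → A} (hnonpos : ∀ n ≤ 0, Ψ n = 0)
    (hrel : ∀ k l, relRHS C K Ψ k l = 0) (n : ℕ) : Ψ n = 0 := by
  induction n using Nat.twoStepInduction with
  | zero => exact hnonpos 0 le_rfl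
  | one =>
    -- at `(k, l) = (0, 0)` the two `Ψ 1` terms add up, so this needs `(2 : F) ≠ 0`
    have h00 := hrel 0 0
    simp only [relRHS, sub_self, zero_add, zero_sub, hnonpos (-1) (by norm_num), zero_mul,
      smul_zero, sub_zero] at h00
    rw [← two_smul F, smul_smul, smul_eq_zero, Units.mul_left_eq_zero] at h00
    exact_mod_cast h00.resolve_left (mul_ne_zero two_ne_zero (zpow_ne_zero _ v_ne_zero))
  | more n ih _ =>
    have h := hrel 0 (n + 1)
    simp only [relRHS] at h
    rw [hnonpos (0 - (n + 1) + 1) (by omega), hnonpos (0 - (n + 1) - 1) (by omega),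
      show (n : ℤ) + 1 - 0 - 1 = n by ring, ih] at h
    simp only [zero_mul, smul_zero, sub_zero, add_zero, smul_eq_zero, Units.mul_left_eq_zero] at h
    push_cast
    convert h.resolve_left (zpow_ne_zero _ v_ne_zero) using 2
    ring

-- The coefficient of `u ^ n` in `exp ((v - v⁻¹) * ∑_{r ≥ 1} H' r * u ^ r)`.
def expCoeff (H' : ℕ → A) (n : ℕ) : A :=
  ∑ k ∈ Icc 1 n, ((v - v⁻¹) ^ k / (k.factorial : F)) •
    ∑ f ∈ (Nat.antidiagonalTuple k n).filter (fun f => ∀ t, 1 ≤ f t),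
      (List.ofFn (fun t => H' (f t))).prod

theorem expCoeff_sub_smul_mem {S : Subalgebra F A} {H' : ℕ → A} {n : ℕ} (hn : 1 ≤ n)
    (hS : ∀ i, 1 ≤ i → i < n → H' i ∈ S) : expCoeff H' n - (v - v⁻¹) • H' n ∈ S := by
  have hone : ∀ t : Fin 1, 1 ≤ ![n] t := fun t => by fin_cases t; exact hn
  rw [expCoeff, ← add_sum_erase _ _ (mem_Icc.mpr ⟨le_rfl, hn⟩), Nat.antidiagonalTuple_one,
    filter_singleton, if_pos hone]
  simp only [sum_singleton, List.ofFn_succ, List.ofFn_zero, List.prod_cons, List.prod_nil,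
    Fin.isValue, Matrix.cons_val_zero, mul_one, pow_one, Nat.factorial_one, Nat.cast_one,
    div_one, add_sub_cancel_left]
  refine S.sum_mem fun k hk => S.smul_mem (S.sum_mem fun f hf => ?_) _
  obtain ⟨hk1, hk⟩ := mem_erase.mp hk
  obtain ⟨hf, hpos⟩ := mem_filter.mp hf
  refine S.list_prod_mem fun x hx => ?_
  obtain ⟨t, rfl⟩ := List.mem_ofFn.mp hx
  have hk2 : 2 ≤ k := by have := (mem_Icc.mp hk).1; omega
  exact hS _ (hpos t) (lt_of_mem_antidiagonalTuple hk2 hf hpos t)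

theorem mem_of_expCoeff_mem {S : Subalgebra F A} {Θ : ℤ → A} {H' : ℕ → A}
    (hexp : ∀ n : ℕ, 1 ≤ n → (v - v⁻¹) • Θ n = expCoeff H' n)
    (hΘ : ∀ n : ℕ, 1 ≤ n → Θ n ∈ S) (n : ℕ) (hn : 1 ≤ n) : H' n ∈ S := by
  induction n using Nat.strong_induction_on with
  | _ n ih =>
    have hrest := expCoeff_sub_smul_mem hn fun i hi hin => ih i hin hi
    rw [← hexp n hn] at hrest
    have hsmul : (v - v⁻¹) • H' n ∈ S := by
      simpa using S.sub_mem (S.smul_mem (hΘ n hn) (v - v⁻¹)) hrest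
    simpa [smul_smul, v_sub_inv_ne_zero] using S.smul_mem hsmul (v - v⁻¹)⁻¹

end Commutator

theorem stmt18_general (A : Type) [Ring A] [Algebra F A] (C K : Aˣ)
    (hC : ∀ x : A, (C : A) * x = x * C) (hK : ∀ x : A, (K : A) * x = x * K)
    (B : ℤ → A) (Θ : ℤ → A)
    (h0 : Θ 0 = ((v - v⁻¹)⁻¹ : F) • (1 : A)) (hneg : ∀ n : ℤ, n < 0 → Θ n = 0)
    (hrel : ∀ k l : ℤ,
      qc (B k) (B (l + 1)) (-2) - (v ^ (-2 : ℤ)) • qc (B (k + 1)) (B l) 2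
      = (v ^ (-2 : ℤ)) • (Θ (l - k + 1) * ((C ^ k * K : Aˣ) : A))
        - (v ^ (-4 : ℤ)) • (Θ (l - k - 1) * ((C ^ (k + 1) * K : Aˣ) : A))
        + (v ^ (-2 : ℤ)) • (Θ (k - l + 1) * ((C ^ l * K : Aˣ) : A))
        - (v ^ (-4 : ℤ)) • (Θ (k - l - 1) * ((C ^ (l + 1) * K : Aˣ) : A)))
    (H : ℕ → A) (c : ℤ)
    (hH : ∀ m : ℕ, 1 ≤ m → ∀ l : ℤ,
      H m * B l - B l * H m
      = (qnum (m * c) / (m : F)) • B (l + m)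
        - (qnum (m * c) / (m : F)) • (B (l - m) * ((C ^ m : Aˣ) : A)))
    (H' : ℕ → A)
    (hexp : ∀ n : ℕ, 1 ≤ n →
      (v - v⁻¹) • Θ (n : ℤ) =
        ∑ k ∈ Finset.Icc 1 n,
          ((v - v⁻¹) ^ k / (k.factorial : F)) •
            ∑ f ∈ (Finset.Nat.antidiagonalTuple k n).filter (fun f => ∀ t, 1 ≤ f t),
              (List.ofFn (fun t => H' (f t))).prod)
    (m n : ℕ) (hm : 1 ≤ m) (hn : 1 ≤ n) :
    H m * Θ (n : ℤ) - Θ (n : ℤ) * H m = 0 ∧ H m * H' n - H' n * H m = 0 := by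
  have hB : ∀ l, ad (H m) (B l) =
      (qnum (m * c) / m) • (B (l + m) - B (l - m) * ((C ^ (m : ℤ) : Aˣ) : A)) := fun l => by
    rw [ad_apply, hH m hm l, smul_sub, zpow_natCast]
  have hΘ : ∀ N : ℕ, ad (H m) (Θ N) = 0 := by
    refine eq_zero_of_relRHS_eq_zero (C := C) (K := K) (Ψ := fun N => ad (H m) (Θ N))
      (fun N hN => ?_) fun k l => ?_
    · rcases hN.lt_or_eq with hlt | rfl
      · rw [hneg N hlt, map_zero]
      · rw [h0, map_smul, ad_apply, mul_one, one_mul, sub_self, smul_zero]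
    · rw [← ad_relRHS hC hK]
      exact ad_relRHS_eq_zero hC (Units.ext (hK C)) hrel hB k l
  have hH' := mem_of_expCoeff_mem hexp (fun N _ => ad_eq_zero_iff.mp (hΘ N)) n hn
  exact ⟨hΘ n, ad_eq_zero_iff.mpr hH'⟩

/-- `[H_m, Θ_n] = 0` and `[H_m, H'_n] = 0` for all `m, n ≥ 1`. -/
theorem stmt18 (A : Type) [Ring A] [Algebra F A] (C K : Aˣ)
    (hC : ∀ x : A, (C : A) * x = x * C) (hK : ∀ x : A, (K : A) * x = x * K)
    (B : ℤ → A) (Θ : ℤ → A)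
    (h0 : Θ 0 = ((v - v⁻¹)⁻¹ : F) • (1 : A)) (hneg : ∀ n : ℤ, n < 0 → Θ n = 0)
    (hrel : ∀ k l : ℤ,
      qc (B k) (B (l + 1)) (-2) - (v ^ (-2 : ℤ)) • qc (B (k + 1)) (B l) 2
      = (v ^ (-2 : ℤ)) • (Θ (l - k + 1) * ((C ^ k * K : Aˣ) : A))
        - (v ^ (-4 : ℤ)) • (Θ (l - k - 1) * ((C ^ (k + 1) * K : Aˣ) : A))
        + (v ^ (-2 : ℤ)) • (Θ (k - l + 1) * ((C ^ l * K : Aˣ) : A))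
        - (v ^ (-4 : ℤ)) • (Θ (k - l - 1) * ((C ^ (l + 1) * K : Aˣ) : A)))
    (H : ℕ → A) (c : ℤ)
    (hH : ∀ m : ℕ, 1 ≤ m → ∀ l : ℤ,
      H m * B l - B l * H m
      = (qnum (m * c) / (m : F)) • B (l + m)
        - (qnum (m * c) / (m : F)) • (B (l - m) * ((C ^ m : Aˣ) : A)))
    (H' : ℕ → A)
    (hcomm : ∀ m n : ℕ, 1 ≤ m → 1 ≤ n → H' m * H' n = H' n * H' m)
    (hexp : ∀ n : ℕ, 1 ≤ n →
      (v - v⁻¹) • Θ (n : ℤ) =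
        ∑ k ∈ Finset.Icc 1 n,
          ((v - v⁻¹) ^ k / (k.factorial : F)) •
            ∑ f ∈ (Finset.Nat.antidiagonalTuple k n).filter (fun f => ∀ t, 1 ≤ f t),
              (List.ofFn (fun t => H' (f t))).prod)
    (m n : ℕ) (hm : 1 ≤ m) (hn : 1 ≤ n) :
    H m * Θ (n : ℤ) - Θ (n : ℤ) * H m = 0 ∧ H m * H' n - H' n * H m = 0 :=
  stmt18_general A C K hC hK B Θ h0 hneg hrel H c hH H' hexp m n hm hn
end
end
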